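/- arXiv:math/0601339 — 2 statements merged into one kernel-verified Lean document; each statement's English description precedes it below -/
import Mathlib

section
/- Let F be the set of functions f : ℕ → ℤ such that f(x) is odd for all x and 2^{n+1} divides (Δⁿf)(x) for all n ≥ 1 and all x. If f, g ∈ F, then the function ⟨f,g⟩(x) = (f(x+1)·g(x) + f(x)·g(x+1))/2 is integer-valued and belongs to F. -/
/-- The forward difference operator. -/
def Δ (f : ℕ → ℤ) : ℕ → ℤ := fun x => f (x + 1) - f x

/-!
Write `P = f(· + 1) g + f g(· + 1) = 2 f g + (Δf) g + f (Δg)`. Since `f` and `g` are odd and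
`4 ∣ Δf`, `4 ∣ Δg`, we get `P ≡ 2 f g (mod 4)`, so `P / 2` is odd. By the Leibniz rule
`Δⁿ(u v)(x) = ∑ᵢ C(n, i) Δⁱu(x) Δⁿ⁻ⁱv(x + i)`, the bounds `2^(i+1) ∣ Δⁱf` (`i ≥ 1`) and
`2^i ∣ Δⁱf` (all `i`) make each of `2 Δⁿ(f g)`, `Δⁿ((Δf) g)`, `Δⁿ(f (Δg))` divisible by `2^(n+2)`,
hence `2^(n+1) ∣ Δⁿ(P / 2)`.
-/

open Finset Function
open scoped fwdDiff

section Leibniz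

variable {M R : Type*} [AddCommMonoid M] [CommRing R] (h : M)

theorem fwdDiff_mul (f g : M → R) :
    Δ_[h] (f * g) = Δ_[h] f * (fun y ↦ g (y + h)) + f * Δ_[h] g := by
  ext y
  simp only [fwdDiff, Pi.mul_apply, Pi.add_apply]
  ring

theorem fwdDiff_iter_mul (f g : M → R) (n : ℕ) (y : M) :
    (Δ_[h])^[n] (f * g) y =
      ∑ i ∈ range (n + 1), n.choose i • ((Δ_[h])^[i] f y * (Δ_[h])^[n - i] g (y + i • h)) := by
  induction n generalizing f g with
  | zero => simp
  | succ n ih =>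
    rw [iterate_succ_apply, fwdDiff_mul, fwdDiff_iter_add, Pi.add_apply, ih, ih,
      sum_choose_succ_nsmul (fun i j ↦ (Δ_[h])^[i] f y * (Δ_[h])^[j] g (y + i • h)), add_comm]
    congr 1
    · refine sum_congr rfl fun i hi ↦ ?_
      rw [← iterate_succ_apply, Nat.succ_sub (Nat.lt_succ_iff.mp (mem_range.mp hi))]
    · refine sum_congr rfl fun i _ ↦ ?_
      rw [fwdDiff_iter_comp_add, succ_nsmul, add_assoc, ← iterate_succ_apply]

theorem dvd_fwdDiff_iter_mul {d : R} {f g : M → R} {n : ℕ} {y : M}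
    (hd : ∀ i ≤ n, d ∣ (Δ_[h])^[i] f y * (Δ_[h])^[n - i] g (y + i • h)) :
    d ∣ (Δ_[h])^[n] (f * g) y := by
  rw [fwdDiff_iter_mul]
  exact dvd_sum fun i hi ↦ dvd_nsmul_of_dvd _ (hd i (Nat.lt_succ_iff.mp (mem_range.mp hi)))

end Leibniz

theorem Δ_iter_add (u v : ℕ → ℤ) (n : ℕ) : Δ^[n] (u + v) = Δ^[n] u + Δ^[n] v :=
  fwdDiff_iter_add 1 u v n

theorem Δ_iter_const_smul (r : ℤ) (u : ℕ → ℤ) (n : ℕ) : Δ^[n] (r • u) = r • Δ^[n] u :=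
  fwdDiff_iter_const_smul 1 r u n

theorem dvd_Δ_iter_mul {d : ℤ} {u v : ℕ → ℤ} {n x : ℕ}
    (hd : ∀ i ≤ n, ∀ y, d ∣ Δ^[i] u x * Δ^[n - i] v y) : d ∣ Δ^[n] (u * v) x :=
  dvd_fwdDiff_iter_mul 1 fun i hi ↦ hd i hi _

def TwoPowDvdDiffs (f : ℕ → ℤ) : Prop := ∀ n ≥ 1, ∀ x, (2 : ℤ) ^ (n + 1) ∣ Δ^[n] f x

namespace TwoPowDvdDiffs

variable {f g : ℕ → ℤ}

theorem two_pow_dvd (hf : TwoPowDvdDiffs f) (n x : ℕ) : (2 : ℤ) ^ n ∣ Δ^[n] f x := by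
  rcases Nat.eq_zero_or_pos n with rfl | hn
  · simp
  · exact (pow_dvd_pow 2 n.le_succ).trans (hf n hn x)

theorem four_dvd_Δ (hf : TwoPowDvdDiffs f) (x : ℕ) : 4 ∣ Δ f x := hf 1 le_rfl x

theorem two_pow_succ_dvd_Δ_iter_mul (hf : TwoPowDvdDiffs f) (hg : TwoPowDvdDiffs g)
    {n : ℕ} (hn : 1 ≤ n) (x : ℕ) : (2 : ℤ) ^ (n + 1) ∣ Δ^[n] (f * g) x := by
  refine dvd_Δ_iter_mul fun i hi y ↦ ?_
  rcases Nat.eq_zero_or_pos i with rfl | hi0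
  · simpa using (hg n hn y).mul_left (f x)
  · rw [show n + 1 = (i + 1) + (n - i) by omega, pow_add]
    exact mul_dvd_mul (hf i hi0 x) (hg.two_pow_dvd _ y)

theorem two_pow_add_two_dvd_Δ_iter_Δ_mul (hf : TwoPowDvdDiffs f) (hg : TwoPowDvdDiffs g)
    (n x : ℕ) : (2 : ℤ) ^ (n + 2) ∣ Δ^[n] (Δ f * g) x := by
  refine dvd_Δ_iter_mul fun i hi y ↦ ?_
  rw [← iterate_succ_apply, show n + 2 = (i + 1 + 1) + (n - i) by omega, pow_add]
  exact mul_dvd_mul (hf (i + 1) i.succ_pos x) (hg.two_pow_dvd _ y)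

end TwoPowDvdDiffs

def crossSum (f g : ℕ → ℤ) : ℕ → ℤ := fun x ↦ f (x + 1) * g x + f x * g (x + 1)

section crossSum

variable {f g : ℕ → ℤ}

theorem crossSum_eq (f g : ℕ → ℤ) : crossSum f g = (2 : ℤ) • (f * g) + Δ f * g + f * Δ g := by
  funext x
  simp only [crossSum, Δ, Pi.add_apply, Pi.mul_apply, Pi.smul_apply, smul_eq_mul]
  ring

theorem two_dvd_crossSum (hf : ∀ x, Odd (f x)) (hg : ∀ x, Odd (g x)) (x : ℕ) :
    2 ∣ crossSum f g x :=
  (((hf _).mul (hg _)).add_odd ((hf _).mul (hg _))).two_dvd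

theorem odd_crossSum_div_two (hfo : ∀ x, Odd (f x)) (hgo : ∀ x, Odd (g x))
    (hf : TwoPowDvdDiffs f) (hg : TwoPowDvdDiffs g) (x : ℕ) : Odd (crossSum f g x / 2) := by
  obtain ⟨a, ha⟩ := hf.four_dvd_Δ x
  obtain ⟨b, hb⟩ := hg.four_dvd_Δ x
  have h : crossSum f g x = 2 * (f x * g x + 2 * (a * g x + f x * b)) := by
    simp only [crossSum_eq, Pi.add_apply, Pi.mul_apply, Pi.smul_apply, smul_eq_mul, ha, hb]
    ring
  rw [h, Int.mul_ediv_cancel_left _ two_ne_zero]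
  exact ((hfo x).mul (hgo x)).add_even (even_two_mul _)

theorem two_pow_add_two_dvd_Δ_iter_crossSum (hf : TwoPowDvdDiffs f) (hg : TwoPowDvdDiffs g)
    {n : ℕ} (hn : 1 ≤ n) (x : ℕ) : (2 : ℤ) ^ (n + 2) ∣ Δ^[n] (crossSum f g) x := by
  rw [crossSum_eq, Δ_iter_add, Δ_iter_add, Δ_iter_const_smul]
  refine dvd_add (dvd_add ?_ (hf.two_pow_add_two_dvd_Δ_iter_Δ_mul hg n x)) ?_
  · rw [pow_succ']
    exact mul_dvd_mul_left 2 (hf.two_pow_succ_dvd_Δ_iter_mul hg hn x)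
  · rw [mul_comm]
    exact hg.two_pow_add_two_dvd_Δ_iter_Δ_mul hf n x

end crossSum

/-- The class `F` is closed under `⟨f,g⟩(x) = (f(x+1)g(x) + f(x)g(x+1))/2`,
which is integer-valued. -/
theorem pairing_mem_F (f g : ℕ → ℤ)
    (hfodd : ∀ x, Odd (f x))
    (hfdvd : ∀ n ≥ 1, ∀ x, (2 : ℤ) ^ (n + 1) ∣ Δ^[n] f x)
    (hgodd : ∀ x, Odd (g x))
    (hgdvd : ∀ n ≥ 1, ∀ x, (2 : ℤ) ^ (n + 1) ∣ Δ^[n] g x) :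
    (∀ x, (2 : ℤ) ∣ f (x + 1) * g x + f x * g (x + 1)) ∧
      (∀ x, Odd ((f (x + 1) * g x + f x * g (x + 1)) / 2)) ∧
      ∀ n ≥ 1, ∀ x, (2 : ℤ) ^ (n + 1) ∣
        Δ^[n] (fun x => (f (x + 1) * g x + f x * g (x + 1)) / 2) x := by
  refine ⟨two_dvd_crossSum hfodd hgodd, odd_crossSum_div_two hfodd hgodd hfdvd hgdvd,
    fun n hn x ↦ ?_⟩
  have hhalf : (2 : ℤ) • (fun y ↦ crossSum f g y / 2) = crossSum f g :=
    funext fun y ↦ Int.mul_ediv_cancel' (two_dvd_crossSum hfodd hgodd y)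
  have h := two_pow_add_two_dvd_Δ_iter_crossSum hfdvd hgdvd hn x
  rw [← hhalf, Δ_iter_const_smul, Pi.smul_apply, smul_eq_mul, pow_succ' 2 (n + 1)] at h
  exact (mul_dvd_mul_iff_left two_ne_zero).mp h
end

section
/- Let q ≡ 1 (mod 4) be an integer and define the q-Catalan number C_n(q) = Σ_P q^{area(P)} = Σ_P Π_i q^{h_i}, summing over Dyck paths P of length 2n with up-step heights h_i. Then the 2-adic valuation of C_n(q) equals s(n+1) - 1, the 2-adic valuation of C_n. -/
/-- Heights of the up-steps of a path, starting at height `h`. -/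
def upHeights : List Bool → ℕ → List ℕ
  | [], _ => []
  | true :: t, h => h :: upHeights t (h + 1)
  | false :: t, h => upHeights t (h - 1)

/-- A list of steps (`true` = up, `false` = down) is a Dyck path. -/
def IsDyck (l : List Bool) : Prop :=
  l.count true = l.count false ∧ ∀ p ∈ l.inits, p.count false ≤ p.count true

instance : DecidablePred IsDyck := fun l => by unfold IsDyck; infer_instance

/-- The weighted Catalan number `C_n^b`. -/
def wcat (b : ℕ → ℤ) (n : ℕ) : ℤ :=
  ∑ f : Fin (2 * n) → Bool,
    if IsDyck (List.ofFn f) then ((upHeights (List.ofFn f) 0).map b).prod else 0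

/-!
Cutting a Dyck path at its first return to the axis gives the `q`-analogue of Segner's
recurrence `C_{n+1}(q) = ∑_{i+j=n} q^i C_i(q) C_j(q)`: the part under the first arch is lifted
by one unit, which multiplies its weight by `q^i`. Encoding the tree `node l r` as the path
`U l D r`, this cut is the bijection between Dyck paths and binary trees.

Put `c_n = C_n(1)`, `v(n) = ν₂(c_n)` and `e_n = C_n(q) - c_n`. Legendre's formula gives
`v(n) = s(n+1) - 1`, and `s(a+b) ≤ s(a) + s(b)` gives `v(i+j+1) ≤ v(i) + v(j) + 1`.
Subtracting the two recurrences, pairing the cross terms `e_i c_j + c_i e_j` over `i + j = n`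
and using `4 ∣ q^i - 1`, induction yields `2^(v(n)+1) ∣ e_n`; hence `C_n(q)` and `c_n` have the
same `2`-adic valuation.
-/

open BinaryTree DyckWord DyckStep Finset

lemma count_map_beq_U (l : List DyckStep) (b : Bool) :
    (l.map (· == U)).count b = l.count (cond b U D) := by
  simp only [List.count_eq_countP, List.countP_map]
  congr; funext x; cases x <;> cases b <;> rfl

lemma isDyck_iff_forall_take {l : List Bool} : IsDyck l ↔
    l.count true = l.count false ∧ ∀ i, (l.take i).count false ≤ (l.take i).count true := by
  simp only [IsDyck, List.mem_inits, List.prefix_iff_eq_take]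
  exact ⟨fun ⟨h1, h2⟩ => ⟨h1, fun i => h2 _ (by simp)⟩,
    fun ⟨h1, h2⟩ => ⟨h1, fun p hp => hp ▸ h2 _⟩⟩

lemma isDyck_map_beq_U_iff {l : List DyckStep} : IsDyck (l.map (· == U)) ↔
    l.count U = l.count D ∧ ∀ i, (l.take i).count D ≤ (l.take i).count U := by
  simp only [isDyck_iff_forall_take, ← List.map_take, count_map_beq_U, cond_true, cond_false]

namespace BinaryTree

def dyckPath : BinaryTree Unit → List Bool
  | nil => []
  | node _ l r => true :: (l.dyckPath ++ false :: r.dyckPath)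

lemma dyckPath_eq_map_toList_ofTree (t : BinaryTree Unit) :
    t.dyckPath = (ofTree t).toList.map (· == U) := by
  induction t with
  | nil => rfl
  | node _ l r ihl ihr =>
    change _ = ([U] ++ (ofTree l).toList ++ [D] ++ (ofTree r).toList).map (· == U)
    simp [dyckPath, ihl, ihr]

lemma isDyck_dyckPath (t : BinaryTree Unit) : IsDyck t.dyckPath := by
  rw [dyckPath_eq_map_toList_ofTree, isDyck_map_beq_U_iff]
  exact ⟨(ofTree t).count_U_eq_count_D, (ofTree t).count_D_le_count_U⟩

lemma dyckPath_injective : Function.Injective dyckPath := by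
  intro s t h
  rw [dyckPath_eq_map_toList_ofTree, dyckPath_eq_map_toList_ofTree] at h
  have hU : Function.Injective (· == U) := by
    intro x y; cases x <;> cases y <;> simp
  exact equivTree.symm.injective (DyckWord.ext (List.map_injective_iff.2 hU h))

lemma exists_dyckPath_eq_of_isDyck {l : List Bool} (hl : IsDyck l) :
    ∃ t : BinaryTree Unit, t.dyckPath = l := by
  have hmap : (l.map (cond · U D)).map (· == U) = l := by
    rw [List.map_map]
    exact (List.map_congr_left fun b _ => by cases b <;> rfl).trans (List.map_id l)
  rw [← hmap, isDyck_map_beq_U_iff] at hl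
  refine ⟨toTree ⟨_, hl.1, hl.2⟩, ?_⟩
  rw [dyckPath_eq_map_toList_ofTree, ofTree_toTree, hmap]

lemma length_dyckPath (t : BinaryTree Unit) : t.dyckPath.length = 2 * t.numNodes := by
  induction t with
  | nil => rfl
  | node _ l r ihl ihr =>
    simp only [dyckPath, numNodes, List.length_cons, List.length_append, ihl, ihr]
    ring

-- A tree path ends at its starting height and never goes below it, so the `h - 1` in
-- `upHeights` never truncates.
lemma upHeights_dyckPath_append (t : BinaryTree Unit) (r : List Bool) (h : ℕ) :
    upHeights (t.dyckPath ++ r) h = upHeights t.dyckPath h ++ upHeights r h := by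
  induction t generalizing r h with
  | nil => rfl
  | node _ l r' ihl ihr => simp [dyckPath, upHeights, ihl, ihr]

lemma upHeights_dyckPath (t : BinaryTree Unit) (h : ℕ) :
    upHeights t.dyckPath h = (upHeights t.dyckPath 0).map (· + h) := by
  induction t generalizing h with
  | nil => rfl
  | node _ l r ihl ihr =>
    simp [dyckPath, upHeights, upHeights_dyckPath_append, ihl (h + 1), ihl 1, ihr h,
      Function.comp_def, add_assoc, add_comm 1]

lemma length_upHeights_dyckPath (t : BinaryTree Unit) (h : ℕ) :
    (upHeights t.dyckPath h).length = t.numNodes := by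
  induction t generalizing h with
  | nil => rfl
  | node _ l r ihl ihr => simp [dyckPath, upHeights, upHeights_dyckPath_append, ihl, ihr]

lemma upHeights_dyckPath_node (l r : BinaryTree Unit) :
    upHeights (node () l r).dyckPath 0 =
      0 :: ((upHeights l.dyckPath 0).map (· + 1) ++ upHeights r.dyckPath 0) := by
  simp [dyckPath, upHeights, upHeights_dyckPath_append, upHeights_dyckPath l 1]

lemma prod_map_pow_upHeights_dyckPath_node {M : Type*} [CommMonoid M] (q : M)
    (l r : BinaryTree Unit) :
    ((upHeights (node () l r).dyckPath 0).map (q ^ ·)).prod =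
      q ^ l.numNodes * ((upHeights l.dyckPath 0).map (q ^ ·)).prod *
        ((upHeights r.dyckPath 0).map (q ^ ·)).prod := by
  simp [upHeights_dyckPath_node, Function.comp_def, pow_succ, List.prod_map_mul,
    length_upHeights_dyckPath, mul_assoc, mul_comm]

end BinaryTree

lemma filter_isDyck_image_ofFn (n : ℕ) :
    ((univ : Finset (Fin (2 * n) → Bool)).image List.ofFn).filter IsDyck =
      (treesOfNumNodesEq n).map ⟨dyckPath, dyckPath_injective⟩ := by
  ext l
  simp only [mem_filter, mem_image, mem_univ, true_and, mem_map, mem_treesOfNumNodesEq,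
    Function.Embedding.coeFn_mk]
  constructor
  · rintro ⟨⟨f, rfl⟩, hf⟩
    obtain ⟨t, ht⟩ := exists_dyckPath_eq_of_isDyck hf
    refine ⟨t, ?_, ht⟩
    have := congrArg List.length ht
    rw [length_dyckPath, List.length_ofFn] at this
    omega
  · rintro ⟨t, rfl, rfl⟩
    refine ⟨⟨fun i => t.dyckPath[i]'(by rw [length_dyckPath]; exact i.2), ?_⟩,
      isDyck_dyckPath t⟩
    exact List.ext_getElem (by simp [length_dyckPath]) (by simp)

lemma wcat_eq_sum_treesOfNumNodesEq (b : ℕ → ℤ) (n : ℕ) :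
    wcat b n = ∑ t ∈ treesOfNumNodesEq n, ((upHeights t.dyckPath 0).map b).prod := by
  rw [wcat, ← sum_image (f := fun l => if IsDyck l then ((upHeights l 0).map b).prod else 0)
    (fun f _ g _ h => List.ofFn_injective h), ← sum_filter, filter_isDyck_image_ofFn, sum_map]
  rfl

lemma wcat_zero (b : ℕ → ℤ) : wcat b 0 = 1 := by
  simp [wcat_eq_sum_treesOfNumNodesEq, dyckPath, upHeights]

lemma wcat_pow_succ (q : ℤ) (n : ℕ) :
    wcat (q ^ ·) (n + 1) =
      ∑ ij ∈ antidiagonal n, q ^ ij.1 * wcat (q ^ ·) ij.1 * wcat (q ^ ·) ij.2 := by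
  have hdisj : (antidiagonal n : Set (ℕ × ℕ)).PairwiseDisjoint fun ij =>
      pairwiseNode (treesOfNumNodesEq ij.1) (treesOfNumNodesEq ij.2) := by
    simp_rw [Set.PairwiseDisjoint, Set.Pairwise, disjoint_left]
    aesop
  simp only [wcat_eq_sum_treesOfNumNodesEq]
  rw [treesOfNumNodesEq_succ, sum_biUnion hdisj]
  refine sum_congr rfl fun ij _ => ?_
  rw [sum_map, sum_product, mul_assoc, sum_mul_sum]
  simp_rw [mul_sum]
  refine sum_congr rfl fun l hl => sum_congr rfl fun r _ => ?_
  rw [mem_treesOfNumNodesEq] at hl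
  exact (prod_map_pow_upHeights_dyckPath_node q l r).trans (by rw [hl, mul_assoc])

section digitSum

variable {p : ℕ} [Fact p.Prime]

open Nat

lemma sub_one_mul_padicValNat_add_one_add_digit_sum (n : ℕ) :
    (p - 1) * padicValNat p (n + 1) + (p.digits (n + 1)).sum = (p.digits n).sum + 1 := by
  have hfac := sub_one_mul_padicValNat_factorial (p := p) (n + 1)
  rw [factorial_succ, padicValNat.mul n.add_one_ne_zero (factorial_ne_zero n), mul_add,
    sub_one_mul_padicValNat_factorial] at hfac
  have := digit_sum_le p n
  have := digit_sum_le p (n + 1)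
  omega

lemma Nat.digit_sum_add_le (m n : ℕ) :
    (p.digits (m + n)).sum ≤ (p.digits m).sum + (p.digits n).sum := by
  have hchoose := choose_ne_zero (le_add_left n m)
  have hfac : padicValNat p (m + n)! =
      padicValNat p ((m + n).choose n) + padicValNat p m ! + padicValNat p n ! := by
    rw [← add_choose_mul_factorial_mul_factorial,
      padicValNat.mul (mul_ne_zero hchoose (factorial_ne_zero m)) (factorial_ne_zero n),
      padicValNat.mul hchoose (factorial_ne_zero m)]
  have hsub := congrArg ((p - 1) * ·) hfac
  simp only [mul_add, sub_one_mul_padicValNat_factorial] at hsub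
  have := digit_sum_le p n
  have := digit_sum_le p m
  have := digit_sum_le p (m + n)
  omega

end digitSum

lemma Nat.digit_sum_base_mul {b : ℕ} (hb : 1 < b) (m : ℕ) :
    (b.digits (b * m)).sum = (b.digits m).sum := by
  rcases m.eq_zero_or_pos with rfl | hm
  · simp
  · simp [Nat.digits_base_mul hb hm]

lemma catalan_ne_zero (n : ℕ) : catalan n ≠ 0 :=
  right_ne_zero_of_mul (succ_mul_catalan_eq_centralBinom n ▸ n.centralBinom_ne_zero)

open Nat in
lemma padicValNat_two_catalan_add_one (n : ℕ) :
    padicValNat 2 (catalan n) + 1 = (digits 2 (n + 1)).sum := by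
  have hcentral : padicValNat 2 n.centralBinom = (digits 2 n).sum := by
    have := sub_one_mul_padicValNat_choose_eq_sub_sum_digits' (p := 2) (k := n) (n := n)
    rw [← two_mul, digit_sum_base_mul one_lt_two] at this
    rw [centralBinom]
    omega
  rw [← succ_mul_catalan_eq_centralBinom,
    padicValNat.mul n.add_one_ne_zero (catalan_ne_zero n)] at hcentral
  have := sub_one_mul_padicValNat_add_one_add_digit_sum (p := 2) n
  omega

lemma padicValNat_two_catalan_add_add_one_le (i j : ℕ) :
    padicValNat 2 (catalan (i + j + 1)) ≤
      padicValNat 2 (catalan i) + padicValNat 2 (catalan j) + 1 := by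
  have := Nat.digit_sum_add_le (p := 2) (i + 1) (j + 1)
  rw [show i + 1 + (j + 1) = i + j + 1 + 1 by ring] at this
  have := padicValNat_two_catalan_add_one i
  have := padicValNat_two_catalan_add_one j
  have := padicValNat_two_catalan_add_one (i + j + 1)
  omega

lemma sum_antidiagonal_pow_mul_sub_eq {R : Type*} [CommRing R] (q : R) (w c : ℕ → R) (n : ℕ) :
    ∑ ij ∈ antidiagonal n, q ^ ij.1 * w ij.1 * w ij.2 -
        ∑ ij ∈ antidiagonal n, c ij.1 * c ij.2 =
      ∑ ij ∈ antidiagonal n, ((q ^ ij.1 - 1) * w ij.1 * w ij.2 +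
        (w ij.1 - c ij.1) * (w ij.2 - c ij.2) + 2 * ((w ij.1 - c ij.1) * c ij.2)) := by
  have hswap : ∑ ij ∈ antidiagonal n, c ij.1 * (w ij.2 - c ij.2) =
      ∑ ij ∈ antidiagonal n, (w ij.1 - c ij.1) * c ij.2 := by
    rw [← Nat.sum_antidiagonal_swap]
    simp only [Prod.fst_swap, Prod.snd_swap, mul_comm]
  calc _ = ∑ ij ∈ antidiagonal n, ((q ^ ij.1 - 1) * w ij.1 * w ij.2 +
            (w ij.1 - c ij.1) * (w ij.2 - c ij.2) + (w ij.1 - c ij.1) * c ij.2 +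
            c ij.1 * (w ij.2 - c ij.2)) := by
        rw [← sum_sub_distrib]
        exact sum_congr rfl fun _ _ => by ring
    _ = _ := by
        rw [sum_add_distrib, hswap, ← sum_add_distrib]
        exact sum_congr rfl fun _ _ => by ring

theorem two_pow_padicValNat_catalan_add_one_dvd_sub {q : ℤ} (hq : 4 ∣ q - 1) {w : ℕ → ℤ}
    (h0 : w 0 = 1)
    (hrec : ∀ n, w (n + 1) = ∑ ij ∈ antidiagonal n, q ^ ij.1 * w ij.1 * w ij.2) (n : ℕ) :
    2 ^ (padicValNat 2 (catalan n) + 1) ∣ w n - catalan n := by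
  induction n using Nat.strong_induction_on with
  | _ n ih =>
  rcases n with _ | n
  · simp [h0]
  set v : ℕ → ℕ := fun i => padicValNat 2 (catalan i)
  have hc (i : ℕ) : (2 : ℤ) ^ v i ∣ catalan i := by
    have := Int.natCast_dvd_natCast.mpr (pow_padicValNat_dvd (p := 2) (n := catalan i))
    rwa [Nat.cast_pow, Nat.cast_ofNat] at this
  have he {i : ℕ} (hi : i ≤ n) : (2 : ℤ) ^ (v i + 1) ∣ w i - catalan i := ih i (by omega)
  have hw {i : ℕ} (hi : i ≤ n) : (2 : ℤ) ^ v i ∣ w i := by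
    simpa using dvd_add ((pow_dvd_pow 2 (v i).le_succ).trans (he hi)) (hc i)
  have hcat : (catalan (n + 1) : ℤ) =
      ∑ ij ∈ antidiagonal n, (catalan ij.1 : ℤ) * catalan ij.2 := by
    rw [catalan_succ']
    push_cast
    rfl
  rw [hrec, hcat, sum_antidiagonal_pow_mul_sub_eq q w (fun i => (catalan i : ℤ))]
  refine dvd_sum fun ⟨i, j⟩ hij => ?_
  simp only [HasAntidiagonal.mem_antidiagonal] at hij
  have hv : v (n + 1) + 1 ≤ v i + v j + 2 := by
    have := padicValNat_two_catalan_add_add_one_le i j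
    simp only [v, ← hij]
    omega
  refine (pow_dvd_pow 2 hv).trans (dvd_add (dvd_add ?_ ?_) ?_)
  · have h4 : (4 : ℤ) ∣ q ^ i - 1 := by simpa using hq.trans (sub_dvd_pow_sub_pow q 1 i)
    rw [show v i + v j + 2 = 2 + v i + v j by ring, pow_add, pow_add]
    exact mul_dvd_mul (mul_dvd_mul (by norm_num [h4]) (hw (by omega))) (hw (by omega))
  · rw [show v i + v j + 2 = (v i + 1) + (v j + 1) by ring, pow_add]
    exact mul_dvd_mul (he (by omega)) (he (by omega))
  · rw [show v i + v j + 2 = 1 + ((v i + 1) + v j) by ring, pow_add, pow_add, pow_one]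
    exact mul_dvd_mul_left 2 (mul_dvd_mul (he (by omega)) (hc j))

lemma padicValInt_eq_of_pow_dvd_sub {p : ℕ} [Fact p.Prime] {a b : ℤ} (ha : a ≠ 0)
    (h : (p : ℤ) ^ (padicValInt p a + 1) ∣ b - a) : padicValInt p b = padicValInt p a := by
  have hiff {m : ℕ} (hm : m ≤ padicValInt p a + 1) :
      (p : ℤ) ^ m ∣ b ↔ (p : ℤ) ^ m ∣ a := by
    rw [← sub_add_cancel b a]
    exact dvd_add_right ((pow_dvd_pow _ hm).trans h)
  have hle := (hiff (Nat.le_succ _)).2 (padicValInt_dvd a)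
  have hnot := (hiff le_rfl).not.2 (by rw [padicValInt_dvd_iff]; omega)
  rw [padicValInt_dvd_iff] at hle hnot
  omega

/-- If `q ≡ 1 (mod 4)`, the `q`-Catalan number `C_n(q) = C_n^{(1,q,q²,…)}`
satisfies `ξ(C_n(q)) = s(n+1) - 1 = ξ(C n)`. -/
theorem q_catalan_two_adic_val (q : ℤ) (hq : q ≡ 1 [ZMOD 4]) (n : ℕ) :
    padicValInt 2 (wcat (fun x => q ^ x) n) = (Nat.digits 2 (n + 1)).sum - 1 ∧
      padicValInt 2 (wcat (fun x => q ^ x) n) = padicValNat 2 (catalan n) := by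
  have hdvd := two_pow_padicValNat_catalan_add_one_dvd_sub hq.symm.dvd (wcat_zero _)
    (wcat_pow_succ q) n
  have hval : padicValInt 2 (wcat (fun x => q ^ x) n) = padicValNat 2 (catalan n) := by
    rw [← padicValInt.of_nat] at hdvd ⊢
    exact padicValInt_eq_of_pow_dvd_sub (by exact_mod_cast catalan_ne_zero n) hdvd
  refine ⟨?_, hval⟩
  have := padicValNat_two_catalan_add_one n
  omega
end
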